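/- arXiv:math/0312242 — 3 statements merged into one kernel-verified Lean document; each statement's English description precedes it below -/
import Mathlib

section
/- Let f : V → ℝ be a function on the vertices of a graph whose coboundary δf is ℓ^p-summable on the edge set for some p ∈ [1, ∞). Then for every ε > 0 there exists a bounded function g : V → ℝ (i.e. g ∈ ℓ^∞(V)) such that ‖δf - δg‖_p < ε. In particular δg is ℓ^p-summable. -/
/-!
Truncate `f` at a height `M` exceeding `|f|` on the endpoints of a finite set `F` of edges that
carries all but `ε ^ p` of `‖δf‖_p ^ p`. Truncation is monotone and 1-Lipschitz, so the
increments of both the truncation `g` and `f - g` along any edge are dominated by those of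
`f`; and `δ(f - g)` vanishes on `F`, so `‖δf - δg‖_p ^ p` is at most the tail of `‖δf‖_p ^ p`
outside `F`.
-/

open Set

section Increments

variable {α : Type*} [AddCommGroup α] [LinearOrder α] [IsOrderedAddMonoid α]

lemma abs_sub_sub_sub_le_of_monotone {φ : α → α} (hmono : Monotone φ)
    (hlip : ∀ c d, |φ c - φ d| ≤ |c - d|) (c d : α) :
    |(c - d) - (φ c - φ d)| ≤ |c - d| := by
  wlog hdc : d ≤ c generalizing c d
  · calc |(c - d) - (φ c - φ d)| = |(d - c) - (φ d - φ c)| := by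
          rw [← abs_neg]; congr 1; abel
      _ ≤ |d - c| := this d c (le_of_not_ge hdc)
      _ = |c - d| := abs_sub_comm d c
  have hφ := hlip c d
  rw [abs_of_nonneg (sub_nonneg.2 hdc), abs_of_nonneg (sub_nonneg.2 (hmono hdc))] at hφ
  rw [abs_of_nonneg (sub_nonneg.2 hdc), abs_le]
  exact ⟨(neg_nonpos.2 (sub_nonneg.2 hdc)).trans (sub_nonneg.2 hφ),
    sub_le_self _ (sub_nonneg.2 (hmono hdc))⟩

lemma abs_sub_sub_sub_projIcc_le {a b : α} (h : a ≤ b) (c d : α) :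
    |(c - d) - ((projIcc a b h c : α) - projIcc a b h d)| ≤ |c - d| :=
  abs_sub_sub_sub_le_of_monotone (φ := fun t => (projIcc a b h t : α))
    (fun _ _ hcd => monotone_projIcc h hcd) (fun _ _ => abs_projIcc_sub_projIcc h) c d

end Increments

section Lp

variable {E : Type*} {p : ℝ} {a b : E → ℝ}

lemma summable_abs_rpow_of_abs_le (hp : 0 ≤ p) (ha : Summable fun e => |a e| ^ p)
    (hba : ∀ e, |b e| ≤ |a e|) : Summable fun e => |b e| ^ p :=
  ha.of_nonneg_of_le (fun _ => Real.rpow_nonneg (abs_nonneg _) p)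
    fun e => Real.rpow_le_rpow (abs_nonneg _) (hba e) hp

lemma tsum_abs_rpow_rpow_inv_lt_of_eq_zero_on (hp : 0 < p) {ε : ℝ} (hε : 0 < ε)
    (ha : Summable fun e => |a e| ^ p) (hba : ∀ e, |b e| ≤ |a e|) {F : Finset E}
    (hbF : ∀ e ∈ F, b e = 0) (htail : ∑' e : {e // e ∉ F}, |a e| ^ p < ε ^ p) :
    (∑' e, |b e| ^ p) ^ (1 / p) < ε := by
  have hb := summable_abs_rpow_of_abs_le hp.le ha hba
  have hsupp : Function.support (fun e => |b e| ^ p) ⊆ {e | e ∉ F} := fun e he heF =>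
    he (by simp [hbF e heF, Real.zero_rpow hp.ne'])
  have hlt : ∑' e, |b e| ^ p < ε ^ p :=
    calc ∑' e, |b e| ^ p = ∑' e : {e // e ∉ F}, |b e| ^ p :=
          (tsum_subtype_eq_of_support_subset hsupp).symm
      _ ≤ ∑' e : {e // e ∉ F}, |a e| ^ p :=
          (hb.subtype _).tsum_le_tsum
            (fun e => Real.rpow_le_rpow (abs_nonneg _) (hba e) hp.le) (ha.subtype _)
      _ < ε ^ p := htail
  calc (∑' e, |b e| ^ p) ^ (1 / p) < (ε ^ p) ^ (1 / p) :=
        Real.rpow_lt_rpow (tsum_nonneg fun _ => Real.rpow_nonneg (abs_nonneg _) p) hlt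
          (by positivity)
    _ = ε := by rw [← Real.rpow_mul hε.le, mul_one_div_cancel hp.ne', Real.rpow_one]

end Lp

/-- Theorem 1, real case: if `f : V → ℝ` has ℓ^p-summable
coboundary `δf(e) = f(x e) - f(x' e)` on the edge set `E` for some `p ∈ [1, ∞)`,
then for every `ε > 0` there is a bounded function `g : V → ℝ` with
`‖δf - δg‖_p < ε`; in particular `δg` is ℓ^p-summable. -/
theorem approx_coboundary_real (V E : Type*) (x x' : E → V) (f : V → ℝ)
    (p : ℝ) (hp : 1 ≤ p)
    (hf : Summable (fun e => |f (x e) - f (x' e)| ^ p)) :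
    ∀ ε > (0 : ℝ), ∃ g : V → ℝ, (∃ C : ℝ, ∀ v, |g v| ≤ C) ∧
      Summable (fun e =>
        |(f (x e) - f (x' e)) - (g (x e) - g (x' e))| ^ p) ∧
      (∑' e, |(f (x e) - f (x' e)) - (g (x e) - g (x' e))| ^ p) ^ (1 / p) < ε ∧
      Summable (fun e => |g (x e) - g (x' e)| ^ p) := by
  classical
  intro ε hε
  have hp0 : 0 < p := one_pos.trans_le hp
  obtain ⟨F, hF⟩ := ((tendsto_tsum_compl_atTop_zero fun e => |f (x e) - f (x' e)| ^ p).eventually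
    (gt_mem_nhds (Real.rpow_pos_of_pos hε p))).exists
  set M := ∑ v ∈ F.image x ∪ F.image x', |f v|
  have hM : -M ≤ M := neg_le_self (Finset.sum_nonneg fun v _ => abs_nonneg _)
  set g : V → ℝ := fun v => projIcc (-M) M hM (f v)
  have hgf : ∀ v ∈ F.image x ∪ F.image x', g v = f v := fun v hv =>
    congrArg Subtype.val (projIcc_of_mem hM (abs_le.1
      (Finset.single_le_sum (fun w _ => abs_nonneg (f w)) hv)))
  have hδg : ∀ e, |g (x e) - g (x' e)| ≤ |f (x e) - f (x' e)| := fun e =>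
    abs_projIcc_sub_projIcc hM
  have hδr : ∀ e, |(f (x e) - f (x' e)) - (g (x e) - g (x' e))| ≤ |f (x e) - f (x' e)| :=
    fun e => abs_sub_sub_sub_projIcc_le hM _ _
  refine ⟨g, ⟨M, fun v => abs_le.2 (projIcc (-M) M hM (f v)).2⟩,
    summable_abs_rpow_of_abs_le hp0.le hf hδr,
    tsum_abs_rpow_rpow_inv_lt_of_eq_zero_on hp0 hε hf hδr (fun e he => ?_) hF,
    summable_abs_rpow_of_abs_le hp0.le hf hδg⟩
  rw [hgf _ (Finset.mem_union_left _ (Finset.mem_image_of_mem x he)),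
    hgf _ (Finset.mem_union_right _ (Finset.mem_image_of_mem x' he)), sub_self]
end

section
/- Let f : V → ℂ be a complex-valued function on the vertices of a graph whose coboundary δf is ℓ^p-summable on the edges for some p ∈ [1, ∞). Then for every ε > 0 there exists a bounded function g : V → ℂ such that ‖δf - δg‖_p < ε. -/
/-!
Truncate `f` coordinatewise at level `n`. Truncation is `1`-Lipschitz, so the error
`δf - δ(trunc ∘ f)` is pointwise dominated by `2 |δf|`, whose `p`-th power is summable; and it
vanishes on each fixed edge as soon as `n` exceeds `|f|` at both endpoints. Dominated convergence
for series then makes the `ℓ^p` error tend to `0`.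
-/

open Filter Topology

def coboundary {V E W : Type*} [Sub W] (x x' : E → V) (f : V → W) (e : E) : W :=
  f (x e) - f (x' e)

section Coboundary

variable {V E W : Type*} [SeminormedAddCommGroup W] (x x' : E → V)

theorem norm_coboundary_sub_coboundary_comp_le {T : W → W} {K : NNReal} (hT : LipschitzWith K T)
    (f : V → W) (e : E) :
    ‖coboundary x x' f e - coboundary x x' (T ∘ f) e‖ ≤ (1 + K) * ‖coboundary x x' f e‖ :=
  calc ‖coboundary x x' f e - coboundary x x' (T ∘ f) e‖
      ≤ ‖coboundary x x' f e‖ + ‖T (f (x e)) - T (f (x' e))‖ := norm_sub_le _ _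
    _ ≤ ‖coboundary x x' f e‖ + K * ‖coboundary x x' f e‖ := by
        grw [← dist_eq_norm, hT.dist_le_mul, coboundary, dist_eq_norm]
    _ = (1 + K) * ‖coboundary x x' f e‖ := by ring

theorem rpow_norm_coboundary_sub_coboundary_comp_le {p : ℝ} (hp : 0 ≤ p) {T : W → W}
    {K : NNReal} (hT : LipschitzWith K T) (f : V → W) (e : E) :
    ‖‖coboundary x x' f e - coboundary x x' (T ∘ f) e‖ ^ p‖
      ≤ (1 + K : ℝ) ^ p * ‖coboundary x x' f e‖ ^ p := by
  rw [Real.norm_of_nonneg (by positivity), ← Real.mul_rpow (by positivity) (norm_nonneg _)]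
  gcongr
  exact norm_coboundary_sub_coboundary_comp_le x x' hT f e

theorem summable_rpow_norm_coboundary_sub_coboundary_comp {p : ℝ} (hp : 0 ≤ p) {f : V → W}
    (hf : Summable fun e => ‖coboundary x x' f e‖ ^ p) {T : W → W} {K : NNReal}
    (hT : LipschitzWith K T) :
    Summable fun e => ‖coboundary x x' f e - coboundary x x' (T ∘ f) e‖ ^ p :=
  (hf.mul_left _).of_norm_bounded (rpow_norm_coboundary_sub_coboundary_comp_le x x' hp hT f)

theorem tendsto_tsum_rpow_norm_coboundary_sub_coboundary_comp {ι : Type*} {l : Filter ι}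
    {p : ℝ} (hp : 0 < p) {f : V → W} (hf : Summable fun e => ‖coboundary x x' f e‖ ^ p)
    {T : ι → W → W} {K : NNReal} (hT : ∀ i, LipschitzWith K (T i))
    (hT_eq : ∀ z, ∀ᶠ i in l, T i z = z) :
    Tendsto (fun i => ∑' e, ‖coboundary x x' f e - coboundary x x' (T i ∘ f) e‖ ^ p) l (𝓝 0) := by
  have h_pointwise (e : E) :
      Tendsto (fun i => ‖coboundary x x' f e - coboundary x x' (T i ∘ f) e‖ ^ p) l (𝓝 0) := by
    refine tendsto_const_nhds.congr' ?_
    filter_upwards [hT_eq (f (x e)), hT_eq (f (x' e))] with i hx hx'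
    simp [coboundary, hx, hx', Real.zero_rpow hp.ne']
  simpa using tendsto_tsum_of_dominated_convergence (hf.mul_left ((1 + K : ℝ) ^ p)) h_pointwise
    (.of_forall fun i => rpow_norm_coboundary_sub_coboundary_comp_le x x' hp.le (hT i) f)

end Coboundary

def realTrunc (M t : ℝ) : ℝ := max (-M) (min M t)

theorem lipschitzWith_realTrunc (M : ℝ) : LipschitzWith 1 (realTrunc M) :=
  (LipschitzWith.id.const_min M).const_max (-M)

theorem abs_realTrunc_le {M : ℝ} (hM : 0 ≤ M) (t : ℝ) : |realTrunc M t| ≤ M :=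
  abs_le.2 ⟨le_max_left _ _, max_le (by linarith) (min_le_left _ _)⟩

theorem realTrunc_of_abs_le {M t : ℝ} (h : |t| ≤ M) : realTrunc M t = t := by
  rw [realTrunc, min_eq_right (abs_le.1 h).2, max_eq_right (abs_le.1 h).1]

namespace Complex

def squareTrunc (M : ℝ) (z : ℂ) : ℂ := ⟨realTrunc M z.re, realTrunc M z.im⟩

theorem lipschitzWith_squareTrunc (M : ℝ) : LipschitzWith 1 (squareTrunc M) := by
  refine LipschitzWith.of_dist_le_mul fun z w => ?_
  have h_re := (lipschitzWith_realTrunc M).dist_le_mul z.re w.re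
  have h_im := (lipschitzWith_realTrunc M).dist_le_mul z.im w.im
  simp only [NNReal.coe_one, one_mul, Real.dist_eq] at h_re h_im
  rw [NNReal.coe_one, one_mul, dist_eq_re_im, dist_eq_re_im]
  exact Real.sqrt_le_sqrt (add_le_add (sq_le_sq.2 h_re) (sq_le_sq.2 h_im))

theorem norm_squareTrunc_le {M : ℝ} (hM : 0 ≤ M) (z : ℂ) : ‖squareTrunc M z‖ ≤ 2 * M :=
  calc ‖squareTrunc M z‖ ≤ |realTrunc M z.re| + |realTrunc M z.im| :=
        norm_le_abs_re_add_abs_im _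
    _ ≤ 2 * M := by linarith [abs_realTrunc_le hM z.re, abs_realTrunc_le hM z.im]

theorem squareTrunc_of_norm_le {M : ℝ} {z : ℂ} (h : ‖z‖ ≤ M) : squareTrunc M z = z := by
  rw [squareTrunc, realTrunc_of_abs_le ((abs_re_le_norm z).trans h),
    realTrunc_of_abs_le ((abs_im_le_norm z).trans h)]

theorem eventually_squareTrunc_natCast_eq (z : ℂ) :
    ∀ᶠ n : ℕ in atTop, squareTrunc n z = z := by
  obtain ⟨N, hN⟩ := exists_nat_ge ‖z‖
  filter_upwards [eventually_ge_atTop N] with n hn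
  exact squareTrunc_of_norm_le (hN.trans (Nat.cast_le.2 hn))

end Complex

/-- Theorem 1, complex case: if `f : V → ℂ` has ℓ^p-summable
coboundary `δf(e) = f(x e) - f(x' e)` on the edges for some `p ∈ [1, ∞)`, then
for every `ε > 0` there is a bounded function `g : V → ℂ` with `‖δf - δg‖_p < ε`. -/
theorem approx_coboundary_complex (V E : Type*) (x x' : E → V) (f : V → ℂ)
    (p : ℝ) (hp : 1 ≤ p)
    (hf : Summable (fun e => ‖f (x e) - f (x' e)‖ ^ p)) :
    ∀ ε > (0 : ℝ), ∃ g : V → ℂ, (∃ C : ℝ, ∀ v, ‖g v‖ ≤ C) ∧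
      Summable (fun e =>
        ‖(f (x e) - f (x' e)) - (g (x e) - g (x' e))‖ ^ p) ∧
      (∑' e, ‖(f (x e) - f (x' e)) - (g (x e) - g (x' e))‖ ^ p) ^ (1 / p) < ε := by
  intro ε hε
  have hp_pos : 0 < p := by linarith
  have h_tendsto := tendsto_tsum_rpow_norm_coboundary_sub_coboundary_comp x x' hp_pos hf
    (fun n : ℕ => Complex.lipschitzWith_squareTrunc n) Complex.eventually_squareTrunc_natCast_eq
  obtain ⟨n, hn⟩ := (h_tendsto.eventually (gt_mem_nhds (Real.rpow_pos_of_pos hε p))).exists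
  refine ⟨Complex.squareTrunc n ∘ f,
    ⟨2 * n, fun v => Complex.norm_squareTrunc_le n.cast_nonneg (f v)⟩,
    summable_rpow_norm_coboundary_sub_coboundary_comp x x' hp_pos.le hf
      (Complex.lipschitzWith_squareTrunc n), ?_⟩
  rw [one_div, Real.rpow_inv_lt_iff_of_pos (tsum_nonneg fun e => by positivity) hε.le hp_pos]
  exact hn
end

section
/- Let G be a discrete group, f ∈ ℓ^∞(G), and g ∈ G. If ρ_g(f) - f ∈ ℓ²(G), then the commutator [m_f, J λ_g J] is a Hilbert–Schmidt operator on ℓ²(G). -/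
noncomputable section

/-- `ℓ²(G)` with complex coefficients. -/
abbrev l2 (G : Type*) := lp (fun _ : G => ℂ) 2

/-- A bounded operator on `ℓ²(G)` is Hilbert–Schmidt if the sum of `‖T δ_g‖²`
over the standard orthonormal basis `(δ_g)` is finite. -/
def IsHS {G : Type*} [DecidableEq G] (T : l2 G →L[ℂ] l2 G) : Prop :=
  Summable (fun g : G => ‖T (lp.single 2 g (1 : ℂ))‖ ^ 2)

/-!
In the standard basis, `m_f` is diagonal and `ρ = J λ_g J` permutes the basis, sending `δ_k` to
`δ_{k g⁻¹}`. So the commutator sends `δ_k` to the single vector `(f (k g⁻¹) - f k) • δ_{k g⁻¹}`,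
and after the reindexing `k = h g` its Hilbert–Schmidt sum is `∑ₕ ‖f h - f (h g)‖²`, finite since
`ρ_g(f) - f ∈ ℓ²(G)`.
-/

open scoped ENNReal

theorem Memℓp.summable_norm_sq {α E : Type*} [NormedAddCommGroup E] {f : α → E}
    (hf : Memℓp f 2) : Summable fun i => ‖f i‖ ^ 2 := by
  simpa using (memℓp_gen_iff (by norm_num)).mp hf

section single

variable {𝕜 : Type*} [NormedRing 𝕜] {p : ℝ≥0∞}

theorem lp.mulOperator_single {α : Type*} [DecidableEq α] {f : α → 𝕜}
    {M : lp (fun _ : α => 𝕜) p → lp (fun _ : α => 𝕜) p} (hM : ∀ ξ h, M ξ h = f h * ξ h)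
    (k : α) (c : 𝕜) : M (lp.single p k c) = lp.single p k (f k * c) := by
  ext h
  rw [hM]
  by_cases hk : h = k
  · subst hk; simp
  · simp [hk]

theorem lp.rightTranslation_single {G : Type*} [Group G] [DecidableEq G] {g : G}
    {R : lp (fun _ : G => 𝕜) p → lp (fun _ : G => 𝕜) p} (hR : ∀ ξ h, R ξ h = ξ (h * g))
    (k : G) (c : 𝕜) : R (lp.single p k c) = lp.single p (k * g⁻¹) c := by
  ext h
  simp only [hR, lp.single_apply, Pi.single_apply, eq_mul_inv_iff_mul_eq]

end single

theorem commutator_mulOperator_rightTranslation_single {G : Type*} [Group G] [DecidableEq G]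
    {f : G → ℂ} {g : G} {M R : l2 G →L[ℂ] l2 G}
    (hM : ∀ ξ h, M ξ h = f h * ξ h) (hR : ∀ ξ h, R ξ h = ξ (h * g)) (k : G) :
    (M ∘L R - R ∘L M) (lp.single 2 k 1) = lp.single 2 (k * g⁻¹) (f (k * g⁻¹) - f k) := by
  simp only [sub_apply, ContinuousLinearMap.comp_apply,
    lp.rightTranslation_single hR, lp.mulOperator_single hM, mul_one, lp.single_sub]

theorem commutator_hilbertSchmidt_general (G : Type*) [Group G] [DecidableEq G]
    (f : G → ℂ) (g : G)
    (hδ : Memℓp (fun h : G => f (h * g) - f h) 2)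
    (M R : l2 G →L[ℂ] l2 G)
    (hM : ∀ (ξ : l2 G) (h : G), M ξ h = f h * ξ h)
    (hR : ∀ (ξ : l2 G) (h : G), R ξ h = ξ (h * g)) :
    IsHS (M ∘L R - R ∘L M) := by
  have hnorm (k : G) :
      ‖(M ∘L R - R ∘L M) (lp.single 2 k 1)‖ = ‖f (k * g⁻¹ * g) - f (k * g⁻¹)‖ := by
    rw [commutator_mulOperator_rightTranslation_single hM hR, lp.norm_single (by norm_num),
      norm_sub_rev, inv_mul_cancel_right]
  simp only [IsHS, hnorm]
  exact (Equiv.mulRight g⁻¹).summable_iff.mpr hδ.summable_norm_sq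

/-- for `f ∈ ℓ^∞(G)` and `g ∈ G` with `ρ_g(f) - f ∈ ℓ²(G)`, the
commutator `[m_f, J λ_g J]` is Hilbert–Schmidt on `ℓ²(G)`.  Here `M` is the
multiplication operator by `f` and `R = J λ_g J` acts by `(R ξ)(h) = ξ(h g)`. -/
theorem commutator_hilbertSchmidt (G : Type*) [Group G] [DecidableEq G]
    (f : G → ℂ) (hf : ∃ C : ℝ, ∀ h, ‖f h‖ ≤ C) (g : G)
    (hδ : Memℓp (fun h : G => f (h * g) - f h) 2)
    (M R : l2 G →L[ℂ] l2 G)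
    (hM : ∀ (ξ : l2 G) (h : G), M ξ h = f h * ξ h)
    (hR : ∀ (ξ : l2 G) (h : G), R ξ h = ξ (h * g)) :
    IsHS (M ∘L R - R ∘L M) :=
  commutator_hilbertSchmidt_general G f g hδ M R hM hR
end
end
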